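/- Let f : ℝ³ → ℝ with ⟨·⟩^m f ∈ L⁴(ℝ³) for some m > 3/4, and define a[f](v) = (1/(4π)) ∫_{ℝ³} f(z)/|v−z| dz. Then ‖∇a[f]‖_{L^∞(ℝ³)} ≤ c(m) ‖⟨·⟩^m f‖_{L⁴(ℝ³)}. -/

import Mathlib

open MeasureTheory
open scoped ENNReal

/-- The gradient of the Newtonian potential,
`∇a[f](v) = −(1/(4π)) ∫ (v−z)|v−z|^{−3} f(z) dz`. -/
noncomputable def gradNewtonPot (f : EuclideanSpace ℝ (Fin 3) → ℝ)
    (v : EuclideanSpace ℝ (Fin 3)) : EuclideanSpace ℝ (Fin 3) :=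
  -(4 * Real.pi)⁻¹ • ∫ z, (f z / ‖v - z‖ ^ 3) • (v - z)

open Set Metric ENNReal in
/-- Near-origin integrability of `‖w‖^{-8/3}` in `ℝ³`. -/
lemma near_kernel_finite :
    ∫⁻ w : EuclideanSpace ℝ (Fin 3) in Metric.ball 0 1,
      ENNReal.ofReal (‖w‖ ^ (-(8/3 : ℝ))) < ⊤ := by
  set E := EuclideanSpace ℝ (Fin 3)
  set μ1 := volume.restrict (Metric.ball (0 : E) 1) with hμ1
  set V := volume (Metric.ball (0 : E) 1) with hV
  have hVlt : V < ⊤ := measure_ball_lt_top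
  have hnn : 0 ≤ᵐ[μ1] fun w : E => ‖w‖ ^ (-(8/3:ℝ)) :=
    Filter.Eventually.of_forall fun w => Real.rpow_nonneg (norm_nonneg _) _
  have hmble : AEMeasurable (fun w : E => ‖w‖ ^ (-(8/3:ℝ))) μ1 :=
    (measurable_norm.pow measurable_const).aemeasurable
  rw [show (∫⁻ w : E in Metric.ball 0 1, ENNReal.ofReal (‖w‖ ^ (-(8/3 : ℝ))))
      = ∫⁻ w, ENNReal.ofReal (‖w‖ ^ (-(8/3 : ℝ))) ∂μ1 from rfl,
    lintegral_eq_lintegral_meas_lt μ1 hnn hmble]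
  -- bound the measure of the superlevel sets
  have hsub : ∀ t : ℝ, 0 < t →
      {w : E | t < ‖w‖ ^ (-(8/3:ℝ))} ⊆ Metric.ball 0 (t ^ (-(3/8):ℝ)) := by
    intro t ht w hw
    simp only [mem_setOf_eq] at hw
    have hw0 : ‖w‖ ≠ 0 := by
      intro h
      rw [h, Real.zero_rpow (by norm_num)] at hw
      linarith
    have hwpos : 0 < ‖w‖ := lt_of_le_of_ne (norm_nonneg w) (Ne.symm hw0)
    have h1 : t ^ ((3:ℝ)/8) < (‖w‖ ^ (-(8/3:ℝ))) ^ ((3:ℝ)/8) :=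
      Real.rpow_lt_rpow ht.le hw (by norm_num)
    have h2 : (‖w‖ ^ (-(8/3:ℝ))) ^ ((3:ℝ)/8) = ‖w‖⁻¹ := by
      rw [← Real.rpow_mul (norm_nonneg w)]
      norm_num
      exact Real.rpow_neg_one _
    rw [h2] at h1
    have htp : 0 < t ^ ((3:ℝ)/8) := Real.rpow_pos_of_pos ht _
    have h3 : ‖w‖ < (t ^ ((3:ℝ)/8))⁻¹ := by
      have := inv_strictAnti₀ htp h1
      rwa [inv_inv] at this
    have h4 : (t ^ ((3:ℝ)/8))⁻¹ = t ^ (-(3/8):ℝ) := by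
      rw [← Real.rpow_neg ht.le]
    rw [mem_ball_zero_iff]
    rw [h4] at h3
    exact h3
  have hball : ∀ t : ℝ, 0 < t →
      μ1 {w : E | t < ‖w‖ ^ (-(8/3:ℝ))} ≤ ENNReal.ofReal (t ^ (-(9/8):ℝ)) * V := by
    intro t ht
    calc μ1 {w : E | t < ‖w‖ ^ (-(8/3:ℝ))}
        ≤ volume {w : E | t < ‖w‖ ^ (-(8/3:ℝ))} := Measure.restrict_le_self _
      _ ≤ volume (Metric.ball (0:E) (t ^ (-(3/8):ℝ))) := measure_mono (hsub t ht)
      _ = ENNReal.ofReal ((t ^ (-(3/8):ℝ)) ^ Module.finrank ℝ E) * V := by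
          rw [Measure.addHaar_ball volume 0 (Real.rpow_nonneg ht.le _)]
      _ = ENNReal.ofReal (t ^ (-(9/8):ℝ)) * V := by
          congr 1
          rw [show Module.finrank ℝ E = 3 from finrank_euclideanSpace_fin,
            ← Real.rpow_natCast (t ^ (-(3/8):ℝ)) 3, ← Real.rpow_mul ht.le]
          norm_num
  have hres : ∀ t : ℝ, μ1 {w : E | t < ‖w‖ ^ (-(8/3:ℝ))} ≤ V := by
    intro t
    calc μ1 _ ≤ μ1 univ := measure_mono (subset_univ _)
      _ = V := by rw [hμ1, Measure.restrict_apply_univ]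
  calc ∫⁻ t in Ioi (0:ℝ), μ1 {w : E | t < ‖w‖ ^ (-(8/3:ℝ))}
      ≤ ∫⁻ t in Ioc (0:ℝ) 1 ∪ Ioi 1, μ1 {w : E | t < ‖w‖ ^ (-(8/3:ℝ))} :=
        lintegral_mono_set Ioi_subset_Ioc_union_Ioi
    _ ≤ (∫⁻ t in Ioc (0:ℝ) 1, μ1 {w : E | t < ‖w‖ ^ (-(8/3:ℝ))})
        + ∫⁻ t in Ioi (1:ℝ), μ1 {w : E | t < ‖w‖ ^ (-(8/3:ℝ))} := lintegral_union_le _ _ _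
    _ < ⊤ := by
        refine ENNReal.add_lt_top.2 ⟨?_, ?_⟩
        · calc (∫⁻ t in Ioc (0:ℝ) 1, μ1 {w : E | t < ‖w‖ ^ (-(8/3:ℝ))})
              ≤ ∫⁻ _ in Ioc (0:ℝ) 1, V := setLIntegral_mono measurable_const fun t _ => hres t
            _ = V * volume (Ioc (0:ℝ) 1) := setLIntegral_const _ _
            _ < ⊤ := by
                refine ENNReal.mul_lt_top hVlt ?_
                simp [Real.volume_Ioc]
        · calc (∫⁻ t in Ioi (1:ℝ), μ1 {w : E | t < ‖w‖ ^ (-(8/3:ℝ))})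
              ≤ ∫⁻ t in Ioi (1:ℝ), ENNReal.ofReal (t ^ (-(9/8):ℝ)) * V := by
                refine setLIntegral_mono ((measurable_id.pow measurable_const).ennreal_ofReal.mul_const V)
                  fun t ht => hball t (lt_trans one_pos ht)
            _ = (∫⁻ t in Ioi (1:ℝ), ENNReal.ofReal (t ^ (-(9/8):ℝ))) * V :=
                lintegral_mul_const' V _ hVlt.ne
            _ < ⊤ := by
                refine ENNReal.mul_lt_top ?_ hVlt
                have hInt : IntegrableOn (fun t : ℝ => t ^ (-(9/8):ℝ)) (Ioi 1) volume :=
                  integrableOn_Ioi_rpow_of_lt (by norm_num) one_pos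
                have := hInt.2
                refine lt_of_le_of_lt (lintegral_mono fun t => ?_) this
                rw [Real.enorm_eq_ofReal_abs]
                exact ENNReal.ofReal_le_ofReal (le_abs_self _)

open Set Metric ENNReal in
/-- Integrability of `‖w‖^{-4}` away from the origin in `ℝ³`. -/
lemma far_kernel_finite :
    ∫⁻ w : EuclideanSpace ℝ (Fin 3) in (Metric.ball 0 1)ᶜ,
      ENNReal.ofReal (‖w‖ ^ (-(4:ℝ))) < ⊤ := by
  set E := EuclideanSpace ℝ (Fin 3)
  have hI : Integrable (fun w : E => (1 + ‖w‖) ^ (-(4:ℝ))) volume :=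
    integrable_one_add_norm (by rw [finrank_euclideanSpace_fin]; norm_num)
  have hbound : ∀ w : E, w ∈ (Metric.ball (0:E) 1)ᶜ →
      ENNReal.ofReal (‖w‖ ^ (-(4:ℝ))) ≤ ENNReal.ofReal (16 * (1 + ‖w‖) ^ (-(4:ℝ))) := by
    intro w hw
    have h1 : (1:ℝ) ≤ ‖w‖ := by
      simpa [mem_ball_zero_iff] using hw
    have hwpos : (0:ℝ) < ‖w‖ := lt_of_lt_of_le one_pos h1
    refine ENNReal.ofReal_le_ofReal ?_
    have h2 : (1 + ‖w‖) ≤ 2 * ‖w‖ := by linarith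
    have h3 : (2 * ‖w‖) ^ (-(4:ℝ)) ≤ (1 + ‖w‖) ^ (-(4:ℝ)) :=
      Real.rpow_le_rpow_of_nonpos (by linarith) h2 (by norm_num)
    have h4 : (2 * ‖w‖) ^ (-(4:ℝ)) = 2 ^ (-(4:ℝ)) * ‖w‖ ^ (-(4:ℝ)) :=
      Real.mul_rpow (by norm_num) hwpos.le
    have h5 : ‖w‖ ^ (-(4:ℝ)) = 16 * (2 * ‖w‖) ^ (-(4:ℝ)) := by
      rw [h4]
      rw [show (2:ℝ) ^ (-(4:ℝ)) = 16⁻¹ by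
        rw [Real.rpow_neg (by norm_num), show (4:ℝ) = ((4:ℕ):ℝ) by norm_num,
          Real.rpow_natCast]
        norm_num]
      ring
    calc ‖w‖ ^ (-(4:ℝ)) = 16 * (2 * ‖w‖) ^ (-(4:ℝ)) := h5
      _ ≤ 16 * (1 + ‖w‖) ^ (-(4:ℝ)) := by nlinarith [h3]
  calc ∫⁻ w : E in (Metric.ball 0 1)ᶜ, ENNReal.ofReal (‖w‖ ^ (-(4:ℝ)))
      ≤ ∫⁻ w : E in (Metric.ball 0 1)ᶜ, ENNReal.ofReal (16 * (1 + ‖w‖) ^ (-(4:ℝ))) :=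
        setLIntegral_mono (((measurable_norm.const_add 1).pow
          measurable_const).const_mul 16).ennreal_ofReal hbound
    _ ≤ ∫⁻ w : E, ENNReal.ofReal (16 * (1 + ‖w‖) ^ (-(4:ℝ))) :=
        setLIntegral_le_lintegral _ _
    _ < ⊤ := by
        have hfin : (∫⁻ w : E, ENNReal.ofReal ((1 + ‖w‖) ^ (-(4:ℝ)))) < ⊤ := by
          refine lt_of_le_of_lt (lintegral_mono fun w => ?_) hI.2
          rw [Real.enorm_eq_ofReal_abs]
          exact ENNReal.ofReal_le_ofReal (le_abs_self _)
        calc ∫⁻ w : E, ENNReal.ofReal (16 * (1 + ‖w‖) ^ (-(4:ℝ)))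
            = ENNReal.ofReal 16 * ∫⁻ w : E, ENNReal.ofReal ((1 + ‖w‖) ^ (-(4:ℝ))) := by
              rw [← lintegral_const_mul' _ _ ENNReal.ofReal_ne_top]
              exact lintegral_congr fun w => ENNReal.ofReal_mul (by norm_num)
          _ < ⊤ := ENNReal.mul_lt_top ENNReal.ofReal_lt_top hfin

/-- for `m > 3/4` there is `c(m)` such that whenever
`⟨·⟩^m f ∈ L⁴(ℝ³)`, one has `‖∇a[f]‖_{L^∞} ≤ c(m) ‖⟨·⟩^m f‖_{L⁴}`. -/
theorem grad_newton_potential_sup_bound (m : ℝ) (hm : 3 / 4 < m) :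
    ∃ c : ℝ, 0 < c ∧ ∀ f : EuclideanSpace ℝ (Fin 3) → ℝ,
      MemLp (fun z => (1 + ‖z‖ ^ 2) ^ (m / 2) * f z) 4 volume →
      ∀ v, ENNReal.ofReal ‖gradNewtonPot f v‖ ≤
        ENNReal.ofReal c *
          eLpNorm (fun z => (1 + ‖z‖ ^ 2) ^ (m / 2) * f z) 4 volume := by
  classical
  set E := EuclideanSpace ℝ (Fin 3)
  -- kernels
  set K : E → ℝ≥0∞ := fun w => ENNReal.ofReal (‖w‖ ^ (-(2:ℝ))) with hK
  set K1 : E → ℝ≥0∞ := (Metric.ball (0:E) 1).indicator K with hK1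
  set K2 : E → ℝ≥0∞ := ((Metric.ball (0:E) 1)ᶜ).indicator K with hK2
  have hKm : Measurable K := (measurable_norm.pow measurable_const).ennreal_ofReal
  have hK1m : Measurable K1 := hKm.indicator measurableSet_ball
  have hK2m : Measurable K2 := hKm.indicator measurableSet_ball.compl
  -- the weight
  set h : E → ℝ≥0∞ := fun z => ENNReal.ofReal ((1 + ‖z‖ ^ 2) ^ (-(m/2))) with hh
  have hhm : Measurable h :=
    (((measurable_norm.pow_const 2).const_add 1).pow measurable_const).ennreal_ofReal
  -- the three constants
  set A : ℝ≥0∞ := ∫⁻ w, K1 w ^ ((4:ℝ)/3) with hA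
  set B : ℝ≥0∞ := ∫⁻ w, K2 w ^ ((2:ℝ)) with hB
  set C : ℝ≥0∞ := ∫⁻ z, h z ^ ((4:ℝ)) with hC
  have hAfin : A < ⊤ := by
    have : A = ∫⁻ w : E in Metric.ball 0 1, ENNReal.ofReal (‖w‖ ^ (-(8/3:ℝ))) := by
      rw [hA, ← lintegral_indicator measurableSet_ball]
      refine lintegral_congr fun w => ?_
      by_cases hw : w ∈ Metric.ball (0:E) 1
      · rw [hK1, Set.indicator_of_mem hw, Set.indicator_of_mem hw, hK,
          ENNReal.ofReal_rpow_of_nonneg (Real.rpow_nonneg (norm_nonneg _) _) (by norm_num),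
          ← Real.rpow_mul (norm_nonneg _)]
        norm_num
      · rw [hK1, Set.indicator_of_notMem hw, Set.indicator_of_notMem hw,
          ENNReal.zero_rpow_of_pos (by norm_num)]
    rw [this]; exact near_kernel_finite
  have hBfin : B < ⊤ := by
    have : B = ∫⁻ w : E in (Metric.ball 0 1)ᶜ, ENNReal.ofReal (‖w‖ ^ (-(4:ℝ))) := by
      rw [hB, ← lintegral_indicator measurableSet_ball.compl]
      refine lintegral_congr fun w => ?_
      by_cases hw : w ∈ (Metric.ball (0:E) 1)ᶜ
      · rw [hK2, Set.indicator_of_mem hw, Set.indicator_of_mem hw, hK,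
          ENNReal.ofReal_rpow_of_nonneg (Real.rpow_nonneg (norm_nonneg _) _) (by norm_num),
          ← Real.rpow_mul (norm_nonneg _)]
        norm_num
      · rw [hK2, Set.indicator_of_notMem hw, Set.indicator_of_notMem hw,
          ENNReal.zero_rpow_of_pos (by norm_num)]
    rw [this]; exact far_kernel_finite
  have hCfin : C < ⊤ := by
    have hI : Integrable (fun z : E => (1 + ‖z‖ ^ 2) ^ (-(4*m) / 2)) volume :=
      integrable_rpow_neg_one_add_norm_sq
        (by rw [finrank_euclideanSpace_fin]; norm_num; linarith)
    have hCeq : C = ∫⁻ z : E, ENNReal.ofReal ((1 + ‖z‖ ^ 2) ^ (-(4*m) / 2)) := by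
      rw [hC]
      refine lintegral_congr fun z => ?_
      rw [hh, ENNReal.ofReal_rpow_of_nonneg (Real.rpow_nonneg (by positivity) _) (by norm_num),
        ← Real.rpow_mul (by positivity)]
      congr 1
      ring
    rw [hCeq]
    have := hI.2
    refine lt_of_le_of_lt (lintegral_mono fun z => ?_) this
    rw [Real.enorm_eq_ofReal_abs]
    exact ENNReal.ofReal_le_ofReal (le_abs_self _)
  -- assemble the constant
  set P : ℝ≥0∞ := ENNReal.ofReal ((4 * Real.pi)⁻¹) with hP
  set D : ℝ≥0∞ := P * (A ^ ((3:ℝ)/4) + C ^ ((1:ℝ)/4) * B ^ ((1:ℝ)/2)) with hD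
  have hDfin : D < ⊤ := by
    rw [hD]
    refine ENNReal.mul_lt_top ENNReal.ofReal_lt_top (ENNReal.add_lt_top.2 ⟨?_, ?_⟩)
    · exact ENNReal.rpow_lt_top_of_nonneg (by norm_num) hAfin.ne
    · exact ENNReal.mul_lt_top
        (ENNReal.rpow_lt_top_of_nonneg (by norm_num) hCfin.ne)
        (ENNReal.rpow_lt_top_of_nonneg (by norm_num) hBfin.ne)
  refine ⟨D.toReal + 1, by positivity, ?_⟩
  have hDle : D ≤ ENNReal.ofReal (D.toReal + 1) := by
    calc D = ENNReal.ofReal D.toReal := (ENNReal.ofReal_toReal hDfin.ne).symm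
      _ ≤ ENNReal.ofReal (D.toReal + 1) := ENNReal.ofReal_le_ofReal (by linarith)
  intro f hf v
  set g : E → ℝ := fun z => (1 + ‖z‖ ^ 2) ^ (m / 2) * f z with hg
  set G : E → ℝ≥0∞ := fun z => (‖g z‖₊ : ℝ≥0∞) with hG
  set F : E → ℝ≥0∞ := fun z => (‖f z‖₊ : ℝ≥0∞) with hF
  set N : ℝ≥0∞ := ∫⁻ z, G z ^ ((4:ℝ)) with hN
  have hGm : AEMeasurable G volume := hf.1.enorm
  -- basic facts about the weight
  have hw0pos : ∀ z : E, (0:ℝ) < (1 + ‖z‖ ^ 2) ^ (m / 2) := fun z =>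
    Real.rpow_pos_of_pos (by positivity) _
  have hw0one : ∀ z : E, (1:ℝ) ≤ (1 + ‖z‖ ^ 2) ^ (m / 2) := by
    intro z
    calc (1:ℝ) = 1 ^ (m/2) := (Real.one_rpow _).symm
      _ ≤ (1 + ‖z‖ ^ 2) ^ (m / 2) :=
        Real.rpow_le_rpow one_pos.le (by nlinarith [sq_nonneg ‖z‖]) (by linarith)
  have hFG : ∀ z, F z = h z * G z := by
    intro z
    show (‖f z‖₊ : ℝ≥0∞)
        = ENNReal.ofReal ((1 + ‖z‖ ^ 2) ^ (-(m / 2)))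
          * (‖(1 + ‖z‖ ^ 2) ^ (m / 2) * f z‖₊ : ℝ≥0∞)
    rw [← enorm_eq_nnnorm, ← enorm_eq_nnnorm, Real.enorm_eq_ofReal_abs, Real.enorm_eq_ofReal_abs, abs_mul,
      abs_of_pos (hw0pos z),
      Real.rpow_neg (by positivity : (0:ℝ) ≤ 1 + ‖z‖ ^ 2),
      ← ENNReal.ofReal_mul (by positivity : (0:ℝ) ≤ ((1 + ‖z‖ ^ 2) ^ (m / 2))⁻¹)]
    congr 1
    rw [inv_mul_cancel_left₀ (hw0pos z).ne']
  have hFm : AEMeasurable F volume :=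
    (hhm.aemeasurable.mul hGm).congr (Filter.Eventually.of_forall fun z => (hFG z).symm)
  have hFleG : ∀ z, F z ≤ G z := by
    intro z
    show (‖f z‖₊ : ℝ≥0∞) ≤ (‖(1 + ‖z‖ ^ 2) ^ (m / 2) * f z‖₊ : ℝ≥0∞)
    rw [← enorm_eq_nnnorm, ← enorm_eq_nnnorm, Real.enorm_eq_ofReal_abs, Real.enorm_eq_ofReal_abs, abs_mul,
      abs_of_pos (hw0pos z)]
    refine ENNReal.ofReal_le_ofReal ?_
    nlinarith [hw0one z, abs_nonneg (f z), hw0pos z]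
  -- pointwise identity for the integrand
  have hterm : ∀ z : E, (‖(f z / ‖v - z‖ ^ 3) • (v - z)‖₊ : ℝ≥0∞) = F z * K (v - z) := by
    intro z
    by_cases hz : v = z
    · subst hz
      simp [hK, Real.zero_rpow (by norm_num : (-(2:ℝ)) ≠ 0)]
    · have hr : (0:ℝ) < ‖v - z‖ := by
        rw [norm_pos_iff, sub_ne_zero]; exact hz
      show (‖(f z / ‖v - z‖ ^ 3) • (v - z)‖₊ : ℝ≥0∞)
          = (‖f z‖₊ : ℝ≥0∞) * ENNReal.ofReal (‖v - z‖ ^ (-(2:ℝ)))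
      rw [← enorm_eq_nnnorm, ← ofReal_norm_eq_enorm, norm_smul, Real.norm_eq_abs, abs_div, abs_pow,
        abs_norm]
      have hre : |f z| / ‖v - z‖ ^ 3 * ‖v - z‖ = |f z| * ‖v - z‖ ^ (-(2:ℝ)) := by
        rw [Real.rpow_neg hr.le, show ((2:ℝ)) = ((2:ℕ):ℝ) by norm_num, Real.rpow_natCast]
        field_simp
      rw [hre, ENNReal.ofReal_mul (abs_nonneg _), ← enorm_eq_nnnorm, Real.enorm_eq_ofReal_abs]
  -- the splitting of the kernel
  have hKsplit : ∀ w, K w = K1 w + K2 w := by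
    intro w
    rw [hK1, hK2]
    exact (congrFun (Set.indicator_self_add_compl (Metric.ball (0:E) 1) K) w).symm
  -- step 0 : pull out the constant
  have step0 : ENNReal.ofReal ‖gradNewtonPot f v‖
      = P * (‖∫ z, (f z / ‖v - z‖ ^ 3) • (v - z)‖₊ : ℝ≥0∞) := by
    rw [gradNewtonPot, norm_smul, Real.norm_eq_abs, abs_neg, abs_inv, abs_of_pos
      (by positivity : (0:ℝ) < 4 * Real.pi), ENNReal.ofReal_mul (by positivity),
      ofReal_norm_eq_enorm, enorm_eq_nnnorm, hP]
  -- step 1 : norm of the integral ≤ lintegral of norms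
  have step1 : (‖∫ z, (f z / ‖v - z‖ ^ 3) • (v - z)‖₊ : ℝ≥0∞)
      ≤ ∫⁻ z, F z * K (v - z) := by
    refine (enorm_integral_le_lintegral_enorm _).trans_eq ?_
    exact lintegral_congr fun z => hterm z
  -- step 2 : split into near and far parts
  have hsubm : Measurable fun z : E => v - z := measurable_const.sub measurable_id
  have step2 : (∫⁻ z, F z * K (v - z))
      = (∫⁻ z, F z * K1 (v - z)) + ∫⁻ z, F z * K2 (v - z) := by
    have hadd := lintegral_add_left' (μ := volume) (f := fun z => F z * K1 (v - z))
      (hFm.mul ((hK1m.comp hsubm).aemeasurable)) (fun z => F z * K2 (v - z))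
    rw [← hadd]
    exact lintegral_congr fun z => by rw [hKsplit (v - z), mul_add]
  -- Conjugate exponent facts
  have h44 : (4:ℝ).HolderConjugate (4/3) := ⟨by norm_num, by norm_num, by norm_num⟩
  have h22 : (2:ℝ).HolderConjugate 2 := ⟨by norm_num, by norm_num, by norm_num⟩
  -- translation invariance
  have htrans1 : (∫⁻ z, K1 (v - z) ^ ((4:ℝ)/3)) = A := by
    rw [hA]
    exact (Measure.measurePreserving_sub_left volume v).lintegral_comp
      (hK1m.pow measurable_const)
  have htrans2 : (∫⁻ z, K2 (v - z) ^ ((2:ℝ))) = B := by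
    rw [hB]
    exact (Measure.measurePreserving_sub_left volume v).lintegral_comp
      (hK2m.pow measurable_const)
  -- step 3 : near part
  have step3 : (∫⁻ z, F z * K1 (v - z)) ≤ N ^ ((1:ℝ)/4) * A ^ ((3:ℝ)/4) := by
    calc (∫⁻ z, F z * K1 (v - z)) ≤ ∫⁻ z, G z * K1 (v - z) :=
          lintegral_mono fun z => mul_le_mul_left (hFleG z) _
      _ ≤ (∫⁻ z, G z ^ ((4:ℝ))) ^ ((1:ℝ)/4)
          * (∫⁻ z, K1 (v - z) ^ ((4:ℝ)/3)) ^ (1/((4:ℝ)/3)) := by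
          simpa using ENNReal.lintegral_mul_le_Lp_mul_Lq volume h44 hGm
            ((hK1m.comp hsubm).aemeasurable)
      _ = N ^ ((1:ℝ)/4) * A ^ ((3:ℝ)/4) := by
          rw [htrans1, ← hN, show (1/((4:ℝ)/3)) = (3:ℝ)/4 by norm_num]
  -- step 4 : far part
  have step4 : (∫⁻ z, F z * K2 (v - z))
      ≤ C ^ ((1:ℝ)/4) * N ^ ((1:ℝ)/4) * B ^ ((1:ℝ)/2) := by
    have hhG : AEMeasurable (fun z => h z * G z) volume := hhm.aemeasurable.mul hGm
    have hcs1 : (∫⁻ z, (h z * G z) * K2 (v - z))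
        ≤ (∫⁻ z, (h z * G z) ^ ((2:ℝ))) ^ ((1:ℝ)/2)
          * (∫⁻ z, K2 (v - z) ^ ((2:ℝ))) ^ ((1:ℝ)/2) := by
      simpa using ENNReal.lintegral_mul_le_Lp_mul_Lq volume h22 hhG
        ((hK2m.comp hsubm).aemeasurable)
    have hcs2 : (∫⁻ z, (h z * G z) ^ ((2:ℝ)))
        ≤ C ^ ((1:ℝ)/2) * N ^ ((1:ℝ)/2) := by
      have : (∫⁻ z, (h z * G z) ^ ((2:ℝ)))
          = ∫⁻ z, (fun z => h z ^ ((2:ℝ))) z * (fun z => G z ^ ((2:ℝ))) z := by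
        refine lintegral_congr fun z => ?_
        rw [ENNReal.mul_rpow_of_nonneg _ _ (by norm_num)]
      rw [this]
      have hcs : (∫⁻ z, (fun z => h z ^ ((2:ℝ))) z * (fun z => G z ^ ((2:ℝ))) z)
          ≤ (∫⁻ z, (h z ^ ((2:ℝ))) ^ ((2:ℝ))) ^ ((1:ℝ)/2)
            * (∫⁻ z, (G z ^ ((2:ℝ))) ^ ((2:ℝ))) ^ ((1:ℝ)/2) := by
        simpa using ENNReal.lintegral_mul_le_Lp_mul_Lq volume h22
          ((hhm.pow measurable_const).aemeasurable)
          (hGm.pow_const _)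
      refine hcs.trans (le_of_eq ?_)
      congr 1
      · rw [hC]
        congr 1
        refine lintegral_congr fun z => ?_
        rw [← ENNReal.rpow_mul]
        norm_num
      · rw [hN]
        congr 1
        refine lintegral_congr fun z => ?_
        rw [← ENNReal.rpow_mul]
        norm_num
    calc (∫⁻ z, F z * K2 (v - z)) = ∫⁻ z, (h z * G z) * K2 (v - z) := by
          refine lintegral_congr fun z => ?_
          rw [hFG z]
      _ ≤ (∫⁻ z, (h z * G z) ^ ((2:ℝ))) ^ ((1:ℝ)/2)
          * (∫⁻ z, K2 (v - z) ^ ((2:ℝ))) ^ ((1:ℝ)/2) := hcs1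
      _ ≤ (C ^ ((1:ℝ)/2) * N ^ ((1:ℝ)/2)) ^ ((1:ℝ)/2) * B ^ ((1:ℝ)/2) := by
          rw [htrans2]
          exact mul_le_mul_left (ENNReal.rpow_le_rpow hcs2 (by norm_num)) _
      _ = C ^ ((1:ℝ)/4) * N ^ ((1:ℝ)/4) * B ^ ((1:ℝ)/2) := by
          rw [ENNReal.mul_rpow_of_nonneg _ _ (by norm_num : (0:ℝ) ≤ 1/2),
            ← ENNReal.rpow_mul, ← ENNReal.rpow_mul]
          norm_num
  -- identify `N ^ (1/4)` with the `eLpNorm`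
  have hNorm : eLpNorm g 4 volume = N ^ ((1:ℝ)/4) := by
    rw [eLpNorm_eq_lintegral_rpow_enorm_toReal (by norm_num) (by norm_num), hN, hG]
    norm_num
    rfl
  -- put everything together
  calc ENNReal.ofReal ‖gradNewtonPot f v‖
      = P * (‖∫ z, (f z / ‖v - z‖ ^ 3) • (v - z)‖₊ : ℝ≥0∞) := step0
    _ ≤ P * ((∫⁻ z, F z * K1 (v - z)) + ∫⁻ z, F z * K2 (v - z)) := by
        exact mul_le_mul_right (step1.trans_eq step2) _
    _ ≤ P * (N ^ ((1:ℝ)/4) * A ^ ((3:ℝ)/4)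
          + C ^ ((1:ℝ)/4) * N ^ ((1:ℝ)/4) * B ^ ((1:ℝ)/2)) :=
        mul_le_mul_right (add_le_add step3 step4) _
    _ = D * N ^ ((1:ℝ)/4) := by rw [hD]; ring
    _ ≤ ENNReal.ofReal (D.toReal + 1) * N ^ ((1:ℝ)/4) := mul_le_mul_left hDle _
    _ = ENNReal.ofReal (D.toReal + 1) * eLpNorm g 4 volume := by rw [hNorm]
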